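/- arXiv:2012.03409 — 3 statements merged into one kernel-verified Lean document; each statement's English description precedes it below -/
import Mathlib

section
/- Let ν be an S-invariant probability measure on a subshift X, 0 < q < 1, and κ = ν ∗ B_{q,1−q}. If a word C of length n satisfies #₁C = max_{W ∈ L_n(X)} #₁W (i.e., C has the maximal number of ones among length-n words of X), then κ(C) = ν(C) · (1−q)^{#₁C}. -/
open Filter MeasureTheory

abbrev FullShift : Type := ℤ → Fin 2

def shift (x : FullShift) : FullShift := fun i => x (i + 1)

def cylinder {n : ℕ} (W : Fin n → Fin 2) : Set FullShift :=
  {x | ∀ i : Fin n, x ((i : ℕ) : ℤ) = W i}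

def ones {n : ℕ} (W : Fin n → Fin 2) : ℕ := (Finset.univ.filter fun i => W i = 1).card

def zeros {n : ℕ} (W : Fin n → Fin 2) : ℕ := (Finset.univ.filter fun i => W i = 0).card

noncomputable def birkhoff (φ : FullShift → ℝ) (n : ℕ) (x : FullShift) : ℝ :=
  ∑ i ∈ Finset.range n, φ (shift^[i] x)

def wordAt (x : FullShift) (n : ℕ) : Fin n → Fin 2 := fun i => x ((i : ℕ) : ℤ)

def hereditaryClosure (X : Set FullShift) : Set FullShift :=
  {y | ∃ x ∈ X, ∀ i : ℤ, y i ≤ x i}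

def Qmul (p : FullShift × FullShift) : FullShift := fun i => p.1 i * p.2 i

/-! A product `x * y` reads `C` on `[0, n)` only if both `x` and `y` read words dominating `C`
there. For `ν`-almost every `x` the word read by `x` has at most `#₁C` ones (it occurs in `X`),
so if it dominates `C` it equals `C`. Hence, up to a null set, `Qmul⁻¹ [C]` is the rectangle
`[C] × {y : y dominates C on [0, n)}`, and the `B`-measure of the second factor is
`∑_{W ≥ C} q ^ #₀W (1 - q) ^ #₁W = (1 - q) ^ #₁C`. -/

open Finset

lemma mem_cylinder_iff {n : ℕ} {W : Fin n → Fin 2} {x : FullShift} :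
    x ∈ cylinder W ↔ wordAt x n = W := by
  simp [_root_.cylinder, wordAt, funext_iff]

lemma measurable_wordAt (n : ℕ) : Measurable (wordAt · n) :=
  measurable_pi_lambda _ fun _ => measurable_pi_apply _

lemma cylinder_eq_preimage_wordAt {n : ℕ} (W : Fin n → Fin 2) :
    cylinder W = (wordAt · n) ⁻¹' {W} := by
  ext x; exact mem_cylinder_iff

lemma measurableSet_cylinder {n : ℕ} (W : Fin n → Fin 2) : MeasurableSet (cylinder W) := by
  rw [cylinder_eq_preimage_wordAt]
  exact measurable_wordAt n (measurableSet_singleton W)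

lemma measurable_Qmul : Measurable Qmul :=
  measurable_pi_lambda _ fun i =>
    ((measurable_pi_apply i).comp measurable_fst).mul ((measurable_pi_apply i).comp measurable_snd)

lemma wordAt_Qmul (p : FullShift × FullShift) (n : ℕ) :
    wordAt (Qmul p) n = wordAt p.1 n * wordAt p.2 n := rfl

lemma measure_preimage_wordAt (μ : Measure FullShift) {n : ℕ} (S : Finset (Fin n → Fin 2)) :
    μ ((wordAt · n) ⁻¹' S) = ∑ W ∈ S, μ (cylinder W) := by
  simp only [cylinder_eq_preimage_wordAt]
  exact (sum_measure_preimage_singleton S fun W _ =>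
    measurable_wordAt n (measurableSet_singleton W)).symm

lemma finTwo_mul_le_left (a b : Fin 2) : a * b ≤ a := by revert a b; decide

lemma finTwo_mul_le_right (a b : Fin 2) : a * b ≤ b := by revert a b; decide

lemma finTwo_mul_eq_left_of_le {a b : Fin 2} : a ≤ b → a * b = a := by revert a b; decide

lemma finTwo_lt_iff {a b : Fin 2} : a < b ↔ a = 0 ∧ b = 1 := by revert a b; decide

lemma finTwo_eq_one_iff_ne_zero (a : Fin 2) : a = 1 ↔ a ≠ 0 := by revert a; decide

lemma ones_strictMono {n : ℕ} : StrictMono (ones (n := n)) := by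
  intro V W hVW
  obtain ⟨hle, i, hi⟩ := Pi.lt_def.1 hVW
  obtain ⟨hVi, hWi⟩ := finTwo_lt_iff.1 hi
  refine card_lt_card ⟨fun j hj => ?_, fun hsub => ?_⟩
  · simp only [mem_filter, mem_univ, true_and] at hj ⊢
    exact le_antisymm (Fin.le_last _) (hj ▸ hle j)
  · have hVi' := (mem_filter.1 (hsub (mem_filter.2 ⟨mem_univ i, hWi⟩))).2
    simp [hVi] at hVi'

lemma prod_ite_eq_pow_zeros_mul_pow_ones {M : Type*} [CommMonoid M] (a b : M) {n : ℕ}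
    (W : Fin n → Fin 2) :
    ∏ i, (if W i = 0 then a else b) = a ^ zeros W * b ^ ones W := by
  simp only [prod_ite, prod_const, zeros, ones, finTwo_eq_one_iff_ne_zero]

-- The sum factors over the coordinates; each coordinate where `C` is `0` contributes
-- `q + (1 - q) = 1`.
lemma sum_Ici_pow_zeros_mul_pow_ones {R : Type*} [CommRing R] (q : R) {n : ℕ}
    (C : Fin n → Fin 2) :
    ∑ W ∈ Ici C, q ^ zeros W * (1 - q) ^ ones W = (1 - q) ^ ones C := by
  have hcoord : ∀ c : Fin 2,
      ∑ a ∈ Ici c, (if a = 0 then q else 1 - q) = if c = 0 then 1 else 1 - q := by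
    intro c
    fin_cases c
    · simp [show Ici (0 : Fin 2) = univ by decide, Fin.sum_univ_two]
    · simp [show Ici (1 : Fin 2) = {1} by decide]
  calc ∑ W ∈ Ici C, q ^ zeros W * (1 - q) ^ ones W
      = ∏ i, ∑ a ∈ Ici (C i), (if a = 0 then q else 1 - q) := by
        rw [prod_univ_sum]
        exact sum_congr rfl fun W _ => (prod_ite_eq_pow_zeros_mul_pow_ones q (1 - q) W).symm
    _ = (1 - q) ^ ones C := by
        simp only [hcoord, prod_ite_eq_pow_zeros_mul_pow_ones, one_pow, one_mul]

lemma measure_setOf_le_wordAt (B : Measure FullShift) [IsFiniteMeasure B] (q : ℝ) {n : ℕ}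
    (hB : ∀ W : Fin n → Fin 2, (B (cylinder W)).toReal = q ^ zeros W * (1 - q) ^ ones W)
    (C : Fin n → Fin 2) :
    (B {y | C ≤ wordAt y n}).toReal = (1 - q) ^ ones C := by
  have hset : {y | C ≤ wordAt y n} = (wordAt · n) ⁻¹' ↑(Ici C) := by
    ext y; simp
  rw [hset, measure_preimage_wordAt, ENNReal.toReal_sum fun W _ => measure_ne_top B _,
    sum_congr rfl fun W _ => hB W, sum_Ici_pow_zeros_mul_pow_ones]

lemma Qmul_preimage_cylinder_inter_eq {n : ℕ} (C : Fin n → Fin 2) :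
    Qmul ⁻¹' cylinder C ∩ {p | ones (wordAt p.1 n) ≤ ones C} =
      cylinder C ×ˢ {y | C ≤ wordAt y n} := by
  ext ⟨x, y⟩
  simp only [Set.mem_inter_iff, Set.mem_preimage, Set.mem_prod, Set.mem_ofPred_eq,
    mem_cylinder_iff, wordAt_Qmul]
  constructor
  · rintro ⟨hC, hones⟩
    have hx : C ≤ wordAt x n := hC ▸ fun i => finTwo_mul_le_left _ _
    have hxC : wordAt x n = C :=
      (hx.eq_of_not_lt fun hlt => (ones_strictMono hlt).not_ge hones).symm
    exact ⟨hxC, hC ▸ fun i => finTwo_mul_le_right _ _⟩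
  · rintro ⟨rfl, hy⟩
    exact ⟨funext fun i => finTwo_mul_eq_left_of_le (hy i), le_rfl⟩

lemma map_Qmul_cylinder (ν B : Measure FullShift) [SFinite B] {n : ℕ} {C : Fin n → Fin 2}
    (hν : ∀ᵐ x ∂ν, ones (wordAt x n) ≤ ones C) :
    (ν.prod B).map Qmul (cylinder C) = ν (cylinder C) * B {y | C ≤ wordAt y n} := by
  have hprod : (ν.prod B) {p : FullShift × FullShift | ones (wordAt p.1 n) ≤ ones C}ᶜ = 0 :=
    Measure.quasiMeasurePreserving_fst.ae hν
  rw [Measure.map_apply measurable_Qmul (measurableSet_cylinder C),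
    ← measure_inter_conull hprod, Qmul_preimage_cylinder_inter_eq, Measure.prod_prod]

theorem stmt5_general (X : Set FullShift)
    (ν B : Measure FullShift) [IsProbabilityMeasure ν] [IsProbabilityMeasure B]
    (hνX : ν X = 1)
    (q : ℝ)
    (hB : ∀ (n : ℕ) (W : Fin n → Fin 2),
      (B (cylinder W)).toReal = q ^ zeros W * (1 - q) ^ ones W)
    (n : ℕ) (C : Fin n → Fin 2)
    (hmax : ∀ W : Fin n → Fin 2, (X ∩ cylinder W).Nonempty → ones W ≤ ones C) :
    (((ν.prod B).map Qmul) (cylinder C)).toReal =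
      (ν (cylinder C)).toReal * (1 - q) ^ ones C := by
  set Y : Set FullShift := {x | ones (wordAt x n) ≤ ones C}
  have hXY : X ⊆ Y := fun x hx => hmax _ ⟨x, hx, mem_cylinder_iff.2 rfl⟩
  have hYm : MeasurableSet Y :=
    measurable_wordAt n (DiscreteMeasurableSpace.forall_measurableSet {W | ones W ≤ ones C})
  have hY : ∀ᵐ x ∂ν, ones (wordAt x n) ≤ ones C := by
    refine (ae_iff_measure_eq hYm.nullMeasurableSet).2 ?_
    rw [measure_univ]
    exact le_antisymm prob_le_one (hνX ▸ measure_mono hXY)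
  rw [map_Qmul_cylinder ν B hY, ENNReal.toReal_mul, measure_setOf_le_wordAt B q (hB n)]

theorem stmt5 (X : Set FullShift) (hcl : IsClosed X) (hne : X.Nonempty)
    (hinv : shift '' X = X)
    (ν B : Measure FullShift) [IsProbabilityMeasure ν] [IsProbabilityMeasure B]
    (hνinv : ν.map shift = ν) (hνX : ν X = 1)
    (q : ℝ) (hq0 : 0 < q) (hq1 : q < 1)
    (hB : ∀ (n : ℕ) (W : Fin n → Fin 2),
      (B (cylinder W)).toReal = q ^ zeros W * (1 - q) ^ ones W)
    (n : ℕ) (C : Fin n → Fin 2) (hC : (X ∩ cylinder C).Nonempty)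
    (hmax : ∀ W : Fin n → Fin 2, (X ∩ cylinder W).Nonempty → ones W ≤ ones C) :
    (((ν.prod B).map Qmul) (cylinder C)).toReal =
      (ν (cylinder C)).toReal * (1 - q) ^ ones C :=
  stmt5_general X ν B hνX q hB n C hmax
end

section
/- Let B ⊆ {2,3,…} and let M_B = ⋃_{b∈B} bℤ be the set of B-multiples. If B = {b₁,…,b_K} is finite, then for any residues r_k ∈ ℤ/b_kℤ (k = 1,…,K), the natural density of ⋃_{k=1}^K (b_kℤ + r_k) is at least the natural density of M_{{b₁,…,b_K}} = ⋃_{k=1}^K b_kℤ. -/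
/-!
Both sets are periodic modulo `L = ∏ k, b k`, so their densities are their proportions in
`[0, L)`, and it suffices to compare the two counts modulo any `Q` divisible by every `b k`.
This goes by induction on the prime factorisation `Q = p ^ e * a`, `p ∤ a`. By the Chinese
remainder theorem a residue mod `Q` is a pair `(x mod p ^ e, n mod a)`, and `b k ∣ m - r k` splits
into `gcd (b k) (p ^ e) ∣ x - r k` and `gcd (b k) a ∣ n - r k`. For fixed `n` the admissible `x`
form a union of progressions whose moduli divide `p ^ e`: it has at least as many elements as its
largest member, and exactly as many in the unshifted case, where the moduli form a chain. Writing
that maximum as the number of `t < p ^ e` lying below some `p ^ e / gcd (b k) (p ^ e)` and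
exchanging the sums over `n` and `t`, the comparison becomes, for each `t`, the inductive
hypothesis modulo `a` for the moduli `gcd (b k) a` with `t < p ^ e / gcd (b k) (p ^ e)`.
-/

open Filter Finset Function Nat Topology

lemma Function.Periodic.comp_mul_add {α : Type*} {f : ℕ → α} {L : ℕ} (hf : Periodic f L) (q : ℕ) :
    (fun k => f (q * L + k)) = f :=
  funext fun k => by rw [add_comm]; exact_mod_cast hf.nat_mul q k

section Counting

variable {p : ℕ → Prop} [DecidablePred p] {L : ℕ}

lemma count_lt_eq_of_le {a n : ℕ} (h : a ≤ n) : count (· < a) n = a := by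
  obtain ⟨c, rfl⟩ := Nat.exists_eq_add_of_le h
  rw [count_add, count_of_forall fun _ h => h]
  simp

lemma Function.Periodic.count_mul (hp : Periodic p L) (q : ℕ) :
    count p (q * L) = q * count p L := by
  induction q with
  | zero => simp
  | succ q ih => simp only [add_mul, one_mul, count_add, hp.comp_mul_add, ih]

lemma Function.Periodic.count_mul_add (hp : Periodic p L) (q n : ℕ) :
    count p (q * L + n) = q * count p L + count p n := by
  simp only [count_add, hp.comp_mul_add, hp.count_mul]

lemma Function.Periodic.count_comp_add_one (hp : Periodic p L) :
    count (fun n => p (n + 1)) L = count p L := by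
  have h := (count_succ' p L).symm.trans (count_succ p L)
  simpa only [hp.eq, add_left_inj] using h

lemma Function.Periodic.tendsto_count_div (hp : Periodic p L) (hL : 0 < L) :
    Tendsto (fun N : ℕ => (count p N : ℝ) / N) atTop (𝓝 (count p L / L)) := by
  set c := count p L with hc
  have hLr : (0 : ℝ) < L := by exact_mod_cast hL
  -- `count p N = N / L * c + count p (N % L)` differs from `N * c / L` by at most `c`
  set err : ℕ → ℝ := fun N => count p (N % L) - (N % L : ℕ) * c / L
  have hcount : ∀ N, (count p N : ℝ) = N * c / L + err N := fun N => by
    have h := hp.count_mul_add (N / L) (N % L)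
    rw [Nat.div_add_mod', ← hc] at h
    have hN : (N : ℝ) = (N / L : ℕ) * L + (N % L : ℕ) := by
      exact_mod_cast (Nat.div_add_mod' N L).symm
    simp only [err, h, hN]
    push_cast
    field_simp
    ring
  have herr : ∀ N, |err N| ≤ c := fun N => by
    have hmod : N % L < L := Nat.mod_lt N hL
    refine abs_sub_le_of_nonneg_of_le (by positivity) ?_ (by positivity) ?_
    · exact_mod_cast count_monotone p hmod.le
    · rw [div_le_iff₀ hLr, mul_comm]
      gcongr
  have hlim : Tendsto (fun N : ℕ => err N / N) atTop (𝓝 0) :=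
    squeeze_zero_norm
      (fun N => by rw [Real.norm_eq_abs, abs_div, Nat.abs_cast]; gcongr; exact herr N)
      (tendsto_const_div_atTop_nhds_zero_nat (c : ℝ))
  have hlim' : Tendsto (fun N : ℕ => (c : ℝ) / L + err N / N) atTop (𝓝 (c / L)) := by
    simpa using hlim.const_add ((c : ℝ) / L)
  refine hlim'.congr' ((eventually_ne_atTop 0).mono fun N hN => ?_)
  dsimp only
  rw [hcount N]
  field_simp

end Counting

lemma card_filter_Icc_one_eq_count (F : ℤ → Prop) [DecidablePred F] (N : ℕ) :
    #{m ∈ Icc (1 : ℤ) N | F m} = count (fun n : ℕ => F (n + 1)) N := by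
  rw [count_eq_card_filter_range]
  refine card_nbij' (fun m => (m - 1).toNat) (fun n => n + 1) ?_ ?_ ?_ ?_ <;>
    intro x hx <;> simp only [coe_filter, Set.mem_ofPred_eq, mem_Icc, mem_range] at hx ⊢
  · have hx' : ((x - 1).toNat : ℤ) + 1 = x := by omega
    exact ⟨by omega, by rw [hx']; exact hx.2⟩
  · exact ⟨⟨by omega, by omega⟩, hx.2⟩
  · omega
  · omega

lemma Function.Periodic.tendsto_card_filter_Icc_div {F : ℤ → Prop} [DecidablePred F] {L : ℕ}
    (hF : Periodic F L) (hL : 0 < L) :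
    Tendsto (fun N : ℕ => (#{m ∈ Icc (1 : ℤ) N | F m} : ℝ) / N) atTop
      (𝓝 (count (fun n : ℕ => F n) L / L)) := by
  have hF' : Periodic (fun n : ℕ => F (n + 1)) L := fun n => by
    simpa only [Nat.cast_add, add_right_comm] using hF (n + 1 : ℤ)
  have hF'' : Periodic (fun n : ℕ => F n) L := fun n => by simpa using hF n
  simp only [card_filter_Icc_one_eq_count]
  simpa only [← hF''.count_comp_add_one, Nat.cast_succ] using hF'.tendsto_count_div hL

lemma count_dvd_sub_eq_div {d P : ℕ} (hd : d ∣ P) (hd0 : 0 < d) (r : ℤ) :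
    count (fun x : ℕ => (d : ℤ) ∣ x - r) P = P / d := by
  obtain ⟨q, rfl⟩ := hd
  have hper : Periodic (fun x : ℕ => (d : ℤ) ∣ x - r) d := fun x => by
    simp only [Nat.cast_add, add_sub_right_comm, dvd_add_self_right]
  have hone : count (fun x : ℕ => (d : ℤ) ∣ x - r) d = 1 := by
    rw [count_eq_card_filter_range, card_eq_one]
    refine ⟨(r % d).toNat, Finset.ext fun x => ?_⟩
    have hr := Int.emod_nonneg r (by omega : (d : ℤ) ≠ 0)
    have hr' := Int.emod_lt_of_pos r (by omega : (0 : ℤ) < d)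
    rw [mem_filter, mem_range, mem_singleton, ← Int.modEq_iff_dvd, Int.ModEq]
    constructor
    · rintro ⟨hx, h⟩
      rw [Int.emod_eq_of_lt (a := (x : ℤ)) (by omega) (by omega)] at h
      omega
    · rintro rfl
      refine ⟨by omega, ?_⟩
      rw [Int.toNat_of_nonneg hr, Int.emod_emod]
  rw [mul_comm, hper.count_mul, hone, Nat.mul_div_cancel _ hd0, mul_one]

lemma sum_range_mul_mod_eq_sum_sum {M : Type*} [AddCommMonoid M] {P Q : ℕ} (hco : Coprime P Q)
    (hP : P ≠ 0) (hQ : Q ≠ 0) (f : ℕ → ℕ → M) :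
    ∑ m ∈ range (P * Q), f (m % P) (m % Q) = ∑ a ∈ range P, ∑ n ∈ range Q, f a n := by
  rw [← sum_product']
  refine sum_nbij' (fun m => (m % P, m % Q)) (fun x => chineseRemainder hco x.1 x.2)
    (fun m _ => ?_) (fun x _ => ?_) (fun m hm => ?_) (fun x hx => ?_) (fun _ _ => rfl)
  · simp only [mem_product, mem_range]
    exact ⟨mod_lt m (by omega), mod_lt m (by omega)⟩
  · exact mem_range.2 (chineseRemainder_lt_mul hco _ _ hP hQ)
  · have h := chineseRemainder_modEq_unique hco ((mod_modEq m P).symm) (mod_modEq m Q).symm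
    exact (h.eq_of_lt_of_lt (mem_range.1 hm) (chineseRemainder_lt_mul hco _ _ hP hQ)).symm
  · obtain ⟨hP', hQ'⟩ := (chineseRemainder hco x.1 x.2).2
    simp only [mem_product, mem_range] at hx
    simp only [Nat.ModEq] at hP' hQ'
    rw [hP', hQ', mod_eq_of_lt hx.1, mod_eq_of_lt hx.2]

lemma count_diag_eq_sum_count {P Q : ℕ} (hco : Coprime P Q) (hP : P ≠ 0) (hQ : Q ≠ 0)
    (G : ℕ → ℕ → Prop) [∀ a n, Decidable (G a n)] (hGP : ∀ n, Periodic (G · n) P)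
    (hGQ : ∀ a, Periodic (G a ·) Q) :
    count (fun m => G m m) (P * Q) = ∑ n ∈ range Q, count (G · n) P := by
  simp only [count_eq_card_filter_range, card_filter]
  rw [sum_comm, ← sum_range_mul_mod_eq_sum_sum hco hP hQ (fun a n => if G a n then 1 else 0)]
  refine sum_congr rfl fun m _ => ?_
  simp only [(hGP _).map_mod_nat, (hGQ _).map_mod_nat]

lemma sum_count_comm (R : ℕ → ℕ → Prop) [∀ t n, Decidable (R t n)] (P Q : ℕ) :
    ∑ n ∈ range Q, count (R · n) P = ∑ t ∈ range P, count (R t ·) Q := by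
  simp only [count_eq_card_filter_range, card_filter]
  exact sum_comm

lemma IsCoprime.mul_dvd_iff {R : Type*} [CommSemiring R] {d c x : R} (h : IsCoprime d c) :
    d * c ∣ x ↔ d ∣ x ∧ c ∣ x :=
  ⟨fun hx => ⟨(dvd_mul_right d c).trans hx, (dvd_mul_left c d).trans hx⟩,
    fun hx => h.mul_dvd hx.1 hx.2⟩

lemma dvd_of_le_of_dvd_prime_pow {p e a b : ℕ} (hp : p.Prime) (ha : a ∣ p ^ e) (hb : b ∣ p ^ e)
    (hab : a ≤ b) : a ∣ b := by
  obtain ⟨i, -, rfl⟩ := (Nat.dvd_prime_pow hp).1 ha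
  obtain ⟨j, -, rfl⟩ := (Nat.dvd_prime_pow hp).1 hb
  exact pow_dvd_pow p ((Nat.pow_le_pow_iff_right hp.one_lt).1 hab)

section Family

variable {ι : Type*}

lemma count_exists_dvd_sub_eq_sum {P Q : ℕ} (hco : Coprime P Q) (hP : P ≠ 0) (hQ : Q ≠ 0)
    {s : Finset ι} {b : ι → ℕ} (hb : ∀ k ∈ s, b k ∣ P * Q) (r : ι → ℤ) :
    count (fun m : ℕ => ∃ k ∈ s, (b k : ℤ) ∣ m - r k) (P * Q) =
      ∑ n ∈ range Q, count (fun x : ℕ =>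
        ∃ k ∈ s, ((b k).gcd Q : ℤ) ∣ n - r k ∧ ((b k).gcd P : ℤ) ∣ x - r k) P := by
  have hsplit : ∀ k ∈ s, ∀ x : ℤ,
      (b k : ℤ) ∣ x ↔ ((b k).gcd Q : ℤ) ∣ x ∧ ((b k).gcd P : ℤ) ∣ x := fun k hk x => by
    rw [← (Nat.isCoprime_iff_coprime.2 (hco.gcd_both (b k) (b k)).symm).mul_dvd_iff,
      ← Nat.cast_mul, mul_comm, ← hco.gcd_mul, Nat.gcd_eq_left (hb k hk)]
  have hdiag : ∀ m : ℕ, (∃ k ∈ s, (b k : ℤ) ∣ m - r k) ↔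
      ∃ k ∈ s, ((b k).gcd Q : ℤ) ∣ m - r k ∧ ((b k).gcd P : ℤ) ∣ m - r k := fun m =>
    exists_congr fun k => and_congr_right fun hk => hsplit k hk _
  simp only [hdiag]
  refine count_diag_eq_sum_count hco hP hQ
    (fun x n => ∃ k ∈ s, ((b k).gcd Q : ℤ) ∣ n - r k ∧ ((b k).gcd P : ℤ) ∣ x - r k)
    (fun n a => ?_) (fun a n => ?_) <;>
    simp only [Nat.cast_add, add_sub_right_comm _ (_ : ℤ), dvd_add_left, Int.natCast_dvd_natCast,
      Nat.gcd_dvd_right]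

lemma count_exists_lt_div_le_count_exists_dvd_sub {P : ℕ} (hP : 0 < P) {S : Finset ι} {d : ι → ℕ}
    (hd : ∀ k ∈ S, d k ∣ P) (r : ι → ℤ) :
    count (fun t => ∃ k ∈ S, t < P / d k) P ≤
      count (fun x : ℕ => ∃ k ∈ S, (d k : ℤ) ∣ x - r k) P := by
  rcases S.eq_empty_or_nonempty with rfl | hS
  · simp
  obtain ⟨k₀, hk₀, hmax⟩ := exists_max_image S (fun k => P / d k) hS
  calc count (fun t => ∃ k ∈ S, t < P / d k) P
      ≤ count (· < P / d k₀) P := count_mono_left fun t _ ⟨k, hk, ht⟩ => ht.trans_le (hmax k hk)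
    _ = count (fun x : ℕ => (d k₀ : ℤ) ∣ x - r k₀) P := by
      rw [count_lt_eq_of_le (Nat.div_le_self P _),
        count_dvd_sub_eq_div (hd k₀ hk₀) (pos_of_dvd_of_pos (hd k₀ hk₀) hP)]
    _ ≤ _ := count_mono_left fun x _ hx => ⟨k₀, hk₀, hx⟩

lemma count_exists_dvd_le_count_exists_lt_div {p e : ℕ} (hp : p.Prime) {S : Finset ι} {d : ι → ℕ}
    (hd : ∀ k ∈ S, d k ∣ p ^ e) :
    count (fun x : ℕ => ∃ k ∈ S, (d k : ℤ) ∣ x) (p ^ e) ≤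
      count (fun t => ∃ k ∈ S, t < p ^ e / d k) (p ^ e) := by
  rcases S.eq_empty_or_nonempty with rfl | hS
  · simp
  obtain ⟨k₀, hk₀, hmin⟩ := exists_min_image S d hS
  -- the divisors of a prime power form a chain, so the union is the single progression `d k₀ ℤ`
  have hchain : ∀ k ∈ S, d k₀ ∣ d k := fun k hk =>
    dvd_of_le_of_dvd_prime_pow hp (hd k₀ hk₀) (hd k hk) (hmin k hk)
  calc count (fun x : ℕ => ∃ k ∈ S, (d k : ℤ) ∣ x) (p ^ e)
      ≤ count (fun x : ℕ => (d k₀ : ℤ) ∣ x - 0) (p ^ e) := count_mono_left fun x _ ⟨k, hk, hx⟩ => by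
        rw [sub_zero]
        exact (Int.natCast_dvd_natCast.2 (hchain k hk)).trans hx
    _ = count (· < p ^ e / d k₀) (p ^ e) := by
      rw [count_lt_eq_of_le (Nat.div_le_self _ _),
        count_dvd_sub_eq_div (hd k₀ hk₀) (pos_of_dvd_of_pos (hd k₀ hk₀) (pow_pos hp.pos e))]
    _ ≤ _ := count_mono_left fun t _ ht => ⟨k₀, hk₀, ht⟩

theorem count_exists_dvd_le_count_exists_dvd_sub (Q : ℕ) {s : Finset ι} {b : ι → ℕ}
    (hb : ∀ k ∈ s, b k ∣ Q) (r : ι → ℤ) :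
    count (fun m : ℕ => ∃ k ∈ s, (b k : ℤ) ∣ m) Q ≤
      count (fun m : ℕ => ∃ k ∈ s, (b k : ℤ) ∣ m - r k) Q := by
  induction Q using Nat.recOnPrimePow generalizing s b with
  | zero => simp
  | one => exact count_mono_left fun m _ ⟨k, hk, _⟩ => ⟨k, hk, by simp [Nat.dvd_one.1 (hb k hk)]⟩
  | prime_pow_mul a p e hp hpa he ih =>
    set P := p ^ e
    have hco : Coprime P a := Nat.Coprime.pow_left e (hp.coprime_iff_not_dvd.2 hpa)
    have hP : P ≠ 0 := (pow_pos hp.pos e).ne'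
    have ha : a ≠ 0 := by rintro rfl; exact hpa (dvd_zero p)
    calc count (fun m : ℕ => ∃ k ∈ s, (b k : ℤ) ∣ m) (P * a)
        = ∑ n ∈ range a, count (fun x : ℕ =>
            ∃ k ∈ s, ((b k).gcd a : ℤ) ∣ n ∧ ((b k).gcd P : ℤ) ∣ x) P := by
          simpa only [Pi.zero_apply, sub_zero] using count_exists_dvd_sub_eq_sum hco hP ha hb 0
      _ ≤ ∑ n ∈ range a, count (fun t => ∃ k ∈ s, ((b k).gcd a : ℤ) ∣ n ∧ t < P / (b k).gcd P) P :=
          sum_le_sum fun n _ => by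
            simpa only [mem_filter, and_assoc] using count_exists_dvd_le_count_exists_lt_div hp
              (S := s.filter fun k => ((b k).gcd a : ℤ) ∣ n) (fun k _ => Nat.gcd_dvd_right _ _)
      _ = ∑ t ∈ range P, count (fun n => ∃ k ∈ s, ((b k).gcd a : ℤ) ∣ n ∧ t < P / (b k).gcd P) a :=
          sum_count_comm _ _ _
      _ ≤ ∑ t ∈ range P, count (fun n =>
            ∃ k ∈ s, ((b k).gcd a : ℤ) ∣ n - r k ∧ t < P / (b k).gcd P) a :=
          sum_le_sum fun t _ => by
            simpa only [mem_filter, and_assoc, and_comm] using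
              ih (s := s.filter fun k => t < P / (b k).gcd P) fun k _ => Nat.gcd_dvd_right _ _
      _ = ∑ n ∈ range a, count (fun t =>
            ∃ k ∈ s, ((b k).gcd a : ℤ) ∣ n - r k ∧ t < P / (b k).gcd P) P :=
          (sum_count_comm _ _ _).symm
      _ ≤ ∑ n ∈ range a, count (fun x : ℕ =>
            ∃ k ∈ s, ((b k).gcd a : ℤ) ∣ n - r k ∧ ((b k).gcd P : ℤ) ∣ x - r k) P :=
          sum_le_sum fun n _ => by
            simpa only [mem_filter, and_assoc] using count_exists_lt_div_le_count_exists_dvd_sub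
              (pos_of_ne_zero hP) (S := s.filter fun k => ((b k).gcd a : ℤ) ∣ n - r k)
              (fun k _ => Nat.gcd_dvd_right _ _) r
      _ = count (fun m : ℕ => ∃ k ∈ s, (b k : ℤ) ∣ m - r k) (P * a) :=
          (count_exists_dvd_sub_eq_sum hco hP ha hb r).symm

end Family

lemma periodic_exists_dvd_sub {ι : Type*} {b : ι → ℤ} {L : ℤ} (hb : ∀ k, b k ∣ L) (r : ι → ℤ) :
    Periodic (fun m : ℤ => ∃ k, b k ∣ m - r k) L := fun m => by
  simp only [add_sub_right_comm, dvd_add_left (hb _)]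

open Classical in
theorem stmt10_general (K : ℕ) (b : Fin K → ℕ) (hb : ∀ k, 2 ≤ b k)
    (r : Fin K → ℤ) :
    ∃ dA dM : ℝ,
      Tendsto (fun N : ℕ =>
          (((Finset.Icc (1 : ℤ) N).filter fun m => ∃ k, (b k : ℤ) ∣ (m - r k)).card : ℝ) / N)
        atTop (nhds dA) ∧
      Tendsto (fun N : ℕ =>
          (((Finset.Icc (1 : ℤ) N).filter fun m => ∃ k, (b k : ℤ) ∣ m).card : ℝ) / N)
        atTop (nhds dM) ∧
      dM ≤ dA := by
  have hL : 0 < ∏ k, b k := prod_pos fun k _ => by have := hb k; omega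
  have hbL : ∀ k, b k ∣ ∏ k, b k := fun k => dvd_prod_of_mem b (mem_univ k)
  have hbL' : ∀ k, (b k : ℤ) ∣ ((∏ k, b k : ℕ) : ℤ) := fun k => Int.natCast_dvd_natCast.2 (hbL k)
  have hM : Periodic (fun m : ℤ => ∃ k, (b k : ℤ) ∣ m) (∏ k, b k : ℕ) := by
    simpa using periodic_exists_dvd_sub hbL' 0
  refine ⟨_, _, (periodic_exists_dvd_sub hbL' r).tendsto_card_filter_Icc_div hL,
    hM.tendsto_card_filter_Icc_div hL, ?_⟩
  have hcount := count_exists_dvd_le_count_exists_dvd_sub _ (s := univ) (fun k _ => hbL k) r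
  simp only [mem_univ, true_and] at hcount
  exact div_le_div_of_nonneg_right (by exact_mod_cast hcount) (Nat.cast_nonneg _)

open Classical in
theorem stmt10 (K : ℕ) (hK : 1 ≤ K) (b : Fin K → ℕ) (hb : ∀ k, 2 ≤ b k)
    (r : Fin K → ℤ) :
    ∃ dA dM : ℝ,
      Tendsto (fun N : ℕ =>
          (((Finset.Icc (1 : ℤ) N).filter fun m => ∃ k, (b k : ℤ) ∣ (m - r k)).card : ℝ) / N)
        atTop (nhds dA) ∧
      Tendsto (fun N : ℕ =>
          (((Finset.Icc (1 : ℤ) N).filter fun m => ∃ k, (b k : ℤ) ∣ m).card : ℝ) / N)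
        atTop (nhds dM) ∧
      dM ≤ dA :=
  stmt10_general K b hb r
end

section
/- Let B = {b₁, b₂, …} ⊆ {2,3,…} be infinite and pairwise coprime with Σ_{b∈B} 1/b < ∞, and let F_B = ℤ \ ⋃_{b∈B} bℤ. Then the natural density of F_B exists and equals d = ∏_{i=1}^∞ (1 − 1/b_i), and this equals the topological entropy of the B-admissible subshift X_B = {y ∈ {0,1}^ℤ : for every b ∈ B, the support of y occupies fewer than b residues mod b}. -/
/-!
Fix `K`. By the Chinese remainder theorem, the naturals avoiding one prescribed residue class
modulo each of `b 0, …, b (K-1)` form a periodic set with period `∏ b i` and exactly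
`∏ (b i - 1)` elements per period, so `N ∏_{i<K} (1 - 1/b i) + O_K(1)` of them lie below `N`.
With the residue `0` this bounds the `B`-free count from above. From below, the numbers below `N`
that are free for the first `K` moduli but divisible by a later `b i` number at most
`1 + N ∑_{i ≥ K} 1/b i`.

A word occurs in `X_B` iff for each `i` its support misses a residue class mod `b i`. Words
supported on the `B`-free positions all occur, so there are at least `2 ^ (#B-free positions)`
of them; every occurring word is supported on the positions avoiding some choice of residues
mod `b 0, …, b (K-1)`, so there are at most `∏ b i · 2 ^ (n ∏_{i<K} (1 - 1/b i) + O_K(1))`.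
Letting `n → ∞` and then `K → ∞` gives both limits.
-/

open Filter MeasureTheory

/-- The B-admissible (B-free) subshift: the support of y misses a residue class mod each b i. -/
def XB (b : ℕ → ℕ) : Set FullShift :=
  {y | ∀ i, ∃ r : ZMod (b i), ∀ m : ℤ, y m = 1 → (m : ZMod (b i)) ≠ r}

open Finset Function Topology

namespace Nat

variable {p : ℕ → Prop} [DecidablePred p] {P : ℕ}

theorem count_mul_add_of_periodic (hp : Periodic p P) (q s : ℕ) :
    count p (q * P + s) = q * count p P + count p s := by
  induction q with
  | zero => simp
  | succ q ih =>
    have hshift : count (fun k => p (P + k)) (q * P + s) = count p (q * P + s) := by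
      congr 1
      funext k
      rw [add_comm]
      exact hp k
    rw [show (q + 1) * P + s = P + (q * P + s) by ring, count_add, hshift, ih]
    ring

theorem abs_count_sub_le_of_periodic (hp : Periodic p P) (hP : 0 < P) (N : ℕ) :
    |(count p N : ℝ) - N * count p P / P| ≤ count p P := by
  obtain ⟨q, s, hs, rfl⟩ : ∃ q s, s < P ∧ N = q * P + s :=
    ⟨N / P, N % P, mod_lt N hP, (div_add_mod' N P).symm⟩
  have hsP : (s : ℝ) * count p P / P ≤ count p P := by
    rw [div_le_iff₀ (by exact_mod_cast hP), mul_comm]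
    exact mul_le_mul_of_nonneg_left (by exact_mod_cast hs.le) (by positivity)
  have hs_le : (count p s : ℝ) ≤ count p P := by exact_mod_cast count_monotone p hs.le
  have hsplit : ((q * P + s : ℕ) : ℝ) * count p P / P = q * count p P + s * count p P / P := by
    field_simp
    push_cast
    ring
  rw [count_mul_add_of_periodic hp, hsplit, abs_le]
  push_cast
  constructor <;> linarith [show (0 : ℝ) ≤ s * count p P / P by positivity]

theorem count_eq_card_filter_fin (n : ℕ) : count p n = #{m : Fin n | p m} := by
  rw [count_eq_card_filter_range]
  refine (card_nbij Fin.val (fun m hm => by simpa using hm) (fun _ _ _ _ => Fin.ext) ?_).symm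
  intro k hk
  simp only [coe_filter, mem_range, Set.mem_ofPred_eq] at hk
  exact ⟨⟨k, hk.1⟩, by simpa using hk.2, rfl⟩

end Nat

section Limits

variable {f p C : ℕ → ℝ} {d : ℝ}

theorem eventually_div_lt_of_forall_le (hp : Tendsto p atTop (𝓝 d))
    (h : ∀ K n, f n ≤ n * p K + C K) {a : ℝ} (hda : d < a) :
    ∀ᶠ n in atTop, f n / n < a := by
  obtain ⟨K, hK⟩ := (hp.eventually (gt_mem_nhds hda)).exists
  have hlim : Tendsto (fun n : ℕ => p K + C K / n) atTop (𝓝 (p K)) := by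
    simpa using tendsto_const_nhds.add (tendsto_const_div_atTop_nhds_zero_nat (C K))
  filter_upwards [hlim.eventually (gt_mem_nhds hK), eventually_gt_atTop 0] with n hn hn0
  refine lt_of_le_of_lt ?_ hn
  rw [div_le_iff₀ (by exact_mod_cast hn0), add_mul, div_mul_cancel₀ _ (by positivity)]
  linarith [h K n]

theorem tendsto_div_of_forall_le_of_forall_le {q D : ℕ → ℝ} (hp : Tendsto p atTop (𝓝 d))
    (hq : Tendsto q atTop (𝓝 d)) (hup : ∀ K n, f n ≤ n * p K + C K)
    (hlo : ∀ K n, n * q K - D K ≤ f n) : Tendsto (fun n => f n / n) atTop (𝓝 d) := by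
  refine tendsto_order.2
    ⟨fun a had => ?_, fun a hda => eventually_div_lt_of_forall_le hp hup hda⟩
  have := eventually_div_lt_of_forall_le (f := fun n => -f n) (C := D) hq.neg
    (fun K n => by linarith [hlo K n]) (neg_lt_neg had)
  filter_upwards [this] with n hn
  rw [neg_div] at hn
  linarith

theorem tendsto_prod_fin_one_sub {g : ℕ → ℝ} (hg : Summable g) :
    Tendsto (fun K => ∏ i : Fin K, (1 - g i)) atTop (𝓝 (∏' i, (1 - g i))) := by
  have := (Real.multipliable_one_add_of_summable hg.neg).hasProd.tendsto_prod_nat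
  simp only [← sub_eq_add_neg] at this
  simpa only [Fin.prod_univ_eq_prod_range (fun i => 1 - g i)] using this

end Limits

section ChineseRemainder

variable {ι : Type*} {b : ι → ℕ}

def AvoidsResidues (r : ∀ i, ZMod (b i)) (k : ℕ) : Prop := ∀ i, (k : ZMod (b i)) ≠ r i

instance [Fintype ι] (r : ∀ i, ZMod (b i)) : DecidablePred (AvoidsResidues r) :=
  inferInstanceAs (DecidablePred fun k : ℕ => ∀ i, (k : ZMod (b i)) ≠ r i)

theorem avoidsResidues_zero_iff {k : ℕ} :
    AvoidsResidues (0 : ∀ i, ZMod (b i)) k ↔ ∀ i, ¬ b i ∣ k := by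
  simp [AvoidsResidues, ZMod.natCast_eq_zero_iff]

variable [Fintype ι] [∀ i, NeZero (b i)]

theorem count_avoidsResidues_prod (hb : Pairwise (Nat.Coprime on b)) (r : ∀ i, ZMod (b i)) :
    Nat.count (AvoidsResidues r) (∏ i, b i) = ∏ i, (b i - 1) := by
  classical
  let e := ZMod.prodEquivPi b hb
  have : NeZero (∏ i, b i) := ⟨prod_ne_zero_iff.2 fun i _ => NeZero.ne _⟩
  have he : ∀ k : ℕ, e k = fun i => (k : ZMod (b i)) := fun k => by ext i; simp [e]
  have he_symm : ∀ y i, ((e.symm y).val : ZMod (b i)) = y i := fun y i => by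
    rw [← congrFun (he _) i, ZMod.natCast_zmod_val, e.apply_symm_apply]
  rw [Nat.count_eq_card_filter_range]
  calc #{k ∈ range (∏ i, b i) | AvoidsResidues r k}
      = #(Fintype.piFinset fun i => univ.erase (r i)) := by
        refine card_nbij' (fun k => e k) (fun y => (e.symm y).val) ?_ ?_ ?_ ?_
        · intro k hk
          simp only [coe_filter, mem_range, Set.mem_ofPred_eq] at hk
          simpa [he, AvoidsResidues] using hk.2
        · intro y hy
          simp only [coe_filter, mem_range, Set.mem_ofPred_eq, ZMod.val_lt, true_and]
          simpa [AvoidsResidues, he_symm] using hy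
        · intro k hk
          simp only [coe_filter, mem_range, Set.mem_ofPred_eq] at hk
          simp [ZMod.val_natCast, Nat.mod_eq_of_lt hk.1]
        · intro y _
          simp
    _ = ∏ i, (b i - 1) := by simp [card_erase_of_mem, ZMod.card]

theorem abs_count_avoidsResidues_sub_le (hb : Pairwise (Nat.Coprime on b)) (r : ∀ i, ZMod (b i))
    (N : ℕ) :
    |(Nat.count (AvoidsResidues r) N : ℝ) - N * ∏ i, (1 - 1 / (b i : ℝ))|
      ≤ ∏ i, (b i : ℝ) := by
  have hperiodic : Periodic (AvoidsResidues r) (∏ i, b i) := by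
    intro k
    simp [AvoidsResidues, (ZMod.natCast_eq_zero_iff _ _).2 (dvd_prod_of_mem b (mem_univ _))]
  have hbound := Nat.abs_count_sub_le_of_periodic hperiodic
    (pos_of_ne_zero (prod_ne_zero_iff.2 fun i _ => NeZero.ne _)) N
  have hdensity :
      ((∏ i, (b i - 1) : ℕ) : ℝ) / (∏ i, b i : ℕ) = ∏ i, (1 - 1 / (b i : ℝ)) := by
    push_cast [Nat.cast_sub (NeZero.one_le)]
    rw [← prod_div_distrib]
    refine prod_congr rfl fun i _ => ?_
    field_simp [NeZero.ne]
  rw [count_avoidsResidues_prod hb r, mul_div_assoc, hdensity] at hbound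
  refine hbound.trans ?_
  exact_mod_cast prod_le_prod' fun i _ => Nat.sub_le (b i) 1

end ChineseRemainder

section Density

open scoped Classical in
theorem card_Icc_filter_not_dvd_eq_count (b : ℕ → ℕ) (N : ℕ) :
    #{m ∈ Icc (1 : ℤ) N | ∀ i, ¬ (b i : ℤ) ∣ m}
      = Nat.count (fun k => ∀ i, ¬ b i ∣ k) (N + 1) := by
  rw [Nat.count_eq_card_filter_range]
  refine card_nbij' Int.toNat (fun k => (k : ℤ)) ?_ ?_ ?_ ?_
  · intro m hm
    simp only [coe_filter, mem_Icc, Set.mem_ofPred_eq] at hm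
    have hm0 : ((m.toNat : ℕ) : ℤ) = m := Int.toNat_of_nonneg (by omega)
    simp only [coe_filter, mem_range, Set.mem_ofPred_eq]
    refine ⟨by omega, fun i hi => hm.2 i ?_⟩
    rw [← hm0]
    exact Int.natCast_dvd_natCast.2 hi
  · intro k hk
    simp only [coe_filter, mem_range, Set.mem_ofPred_eq] at hk
    have hk0 : k ≠ 0 := by
      rintro rfl
      exact hk.2 0 (dvd_zero _)
    simp only [coe_filter, mem_Icc, Set.mem_ofPred_eq, Int.natCast_dvd_natCast]
    exact ⟨⟨by omega, by omega⟩, hk.2⟩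
  · intro m hm
    simp only [coe_filter, mem_Icc, Set.mem_ofPred_eq] at hm
    exact Int.toNat_of_nonneg (by omega)
  · intro k _
    exact Int.toNat_natCast k

variable {b : ℕ → ℕ} [∀ i, NeZero (b i)]

open scoped Classical in
theorem count_not_dvd_le (hb : Pairwise (Nat.Coprime on b)) (K N : ℕ) :
    (Nat.count (fun k => ∀ i, ¬ b i ∣ k) N : ℝ)
      ≤ N * ∏ i : Fin K, (1 - 1 / (b i : ℝ)) + ∏ i : Fin K, (b i : ℝ) := by
  have hK := abs_count_avoidsResidues_sub_le
    (hb.comp_of_injective (Fin.val_injective (n := K))) 0 N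
  have hmono : Nat.count (fun k => ∀ i, ¬ b i ∣ k) N
      ≤ Nat.count (AvoidsResidues (0 : ∀ i : Fin K, ZMod (b i))) N :=
    Nat.count_mono_left fun k _ hk => avoidsResidues_zero_iff.2 fun i => hk i
  linarith [(abs_le.mp hK).2, (Nat.cast_le (α := ℝ)).2 hmono]

open scoped Classical in
theorem count_avoidsResidues_zero_le (hsum : Summable fun i => 1 / (b i : ℝ)) (K N : ℕ) :
    (Nat.count (AvoidsResidues (0 : ∀ i : Fin K, ZMod (b i))) N : ℝ)
      ≤ Nat.count (fun k => ∀ i, ¬ b i ∣ k) N + 1 + N * ∑' j, 1 / (b (j + K) : ℝ) := by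
  obtain ⟨M, hM⟩ : ∃ M, ∀ i ≥ M, N < b i := by
    obtain ⟨M, hM⟩ := (hsum.tendsto_atTop_zero.eventually
      (gt_mem_nhds (by positivity : (0 : ℝ) < 1 / (N + 1)))).exists_forall_of_atTop
    refine ⟨M, fun i hi => ?_⟩
    have := (one_div_lt_one_div (by exact_mod_cast NeZero.pos (b i)) (by positivity)).1 (hM i hi)
    exact_mod_cast (lt_add_one (N : ℝ)).trans this
  have hsub : {k ∈ range N | AvoidsResidues (0 : ∀ i : Fin K, ZMod (b i)) k}
      ⊆ {k ∈ range N | ∀ i, ¬ b i ∣ k} ∪ {0} ∪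
          (Ico K M).biUnion fun i => {k ∈ Ioc 0 N | b i ∣ k} := by
    intro k hk
    simp only [mem_filter, mem_range, mem_union, mem_singleton, mem_biUnion, mem_Ico,
      mem_Ioc, avoidsResidues_zero_iff] at hk ⊢
    by_cases hfree : ∀ i, ¬ b i ∣ k
    · exact Or.inl (Or.inl ⟨hk.1, hfree⟩)
    obtain ⟨i, hi⟩ := not_forall_not.mp hfree
    rcases Nat.eq_zero_or_pos k with rfl | hk0
    · exact Or.inl (Or.inr rfl)
    have hKi : K ≤ i := not_lt.mp fun h => hk.2 ⟨i, h⟩ hi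
    have hiM : i < M := not_le.mp fun h => (hM i h).not_ge ((Nat.le_of_dvd hk0 hi).trans hk.1.le)
    exact Or.inr ⟨i, ⟨hKi, hiM⟩, ⟨hk0, hk.1.le⟩, hi⟩
  have hcard : #{k ∈ range N | AvoidsResidues (0 : ∀ i : Fin K, ZMod (b i)) k}
      ≤ Nat.count (fun k => ∀ i, ¬ b i ∣ k) N + 1 + ∑ i ∈ Ico K M, N / b i := by
    refine (card_le_card hsub).trans ((card_union_le _ _).trans (add_le_add
      ((card_union_le _ _).trans_eq ?_) (card_biUnion_le.trans_eq ?_)))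
    · rw [card_singleton, Nat.count_eq_card_filter_range]
    · exact sum_congr rfl fun i _ => Nat.Ioc_filter_dvd_card_eq_div N (b i)
  have htail :
      ∑ i ∈ Ico K M, ((N / b i : ℕ) : ℝ) ≤ N * ∑' j, 1 / (b (j + K) : ℝ) := by
    calc ∑ i ∈ Ico K M, ((N / b i : ℕ) : ℝ) ≤ ∑ i ∈ Ico K M, N * (1 / (b i : ℝ)) :=
          sum_le_sum fun i _ => by rw [mul_one_div]; exact Nat.cast_div_le
      _ = N * ∑ j ∈ range (M - K), 1 / (b (j + K) : ℝ) := by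
          rw [← mul_sum, sum_Ico_eq_sum_range]
          simp only [add_comm K]
      _ ≤ N * ∑' j, 1 / (b (j + K) : ℝ) :=
          mul_le_mul_of_nonneg_left (((summable_nat_add_iff K).2 hsum).sum_le_tsum _
            fun _ _ => by positivity) (by positivity)
  rw [Nat.count_eq_card_filter_range]
  have := (Nat.cast_le (α := ℝ)).2 hcard
  push_cast at this
  linarith

open scoped Classical in
theorem le_count_not_dvd (hb : Pairwise (Nat.Coprime on b))
    (hsum : Summable fun i => 1 / (b i : ℝ)) (K N : ℕ) :
    N * (∏ i : Fin K, (1 - 1 / (b i : ℝ)) - ∑' j, 1 / (b (j + K) : ℝ))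
        - (∏ i : Fin K, (b i : ℝ) + 1) ≤ Nat.count (fun k => ∀ i, ¬ b i ∣ k) N := by
  have hK := abs_count_avoidsResidues_sub_le
    (hb.comp_of_injective (Fin.val_injective (n := K))) 0 N
  linarith [(abs_le.mp hK).1, count_avoidsResidues_zero_le hsum K N]

end Density

section Words

theorem card_filter_eq_one_imp_mem {ι : Type*} [Fintype ι] [DecidableEq ι] (G : Finset ι) :
    #{W : ι → Fin 2 | ∀ m, W m = 1 → m ∈ G} = 2 ^ #G := by
  have : ({W : ι → Fin 2 | ∀ m, W m = 1 → m ∈ G} : Finset _)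
      = Fintype.piFinset fun m => if m ∈ G then univ else {0} := by
    ext W
    simp only [mem_filter, mem_univ, true_and, Fintype.mem_piFinset]
    refine forall_congr' fun m => ?_
    split_ifs with hm
    · simp [hm]
    · generalize W m = x
      fin_cases x <;> simp [hm]
  rw [this, Fintype.card_piFinset]
  simp [apply_ite card, prod_ite_mem]

open scoped Classical in
noncomputable def admissibleWords (b : ℕ → ℕ) (n : ℕ) : Finset (Fin n → Fin 2) :=
  {W | ∀ i, ∃ r : ZMod (b i), ∀ m : Fin n, W m = 1 → ((m : ℕ) : ZMod (b i)) ≠ r}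

theorem XB_inter_cylinder_nonempty_iff {b : ℕ → ℕ} {n : ℕ} (W : Fin n → Fin 2) :
    (XB b ∩ cylinder W).Nonempty ↔ W ∈ admissibleWords b n := by
  simp only [admissibleWords, mem_filter, mem_univ, true_and]
  constructor
  · rintro ⟨y, hy, hW⟩ i
    obtain ⟨r, hr⟩ := hy i
    exact ⟨r, fun m hm => by simpa using hr m (by rw [hW m]; exact hm)⟩
  · intro h
    let y : FullShift := fun k => if hk : k.toNat < n ∧ 0 ≤ k then W ⟨k.toNat, hk.1⟩ else 0
    refine ⟨y, fun i => ?_, fun m => by simp [y]⟩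
    obtain ⟨r, hr⟩ := h i
    refine ⟨r, fun k hk => ?_⟩
    have hk' : k.toNat < n ∧ 0 ≤ k := by
      by_contra hk'
      simp [y, hk'] at hk
    have := hr ⟨k.toNat, hk'.1⟩ (by simpa [y, hk'] using hk)
    rwa [← Int.cast_natCast, Int.toNat_of_nonneg hk'.2] at this

open scoped Classical in
theorem card_filter_XB_inter_cylinder_nonempty (b : ℕ → ℕ) (n : ℕ) :
    #{W : Fin n → Fin 2 | (XB b ∩ cylinder W).Nonempty} = #(admissibleWords b n) := by
  congr 1
  ext W
  simp [XB_inter_cylinder_nonempty_iff]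

open scoped Classical in
theorem two_pow_count_not_dvd_le_card_admissibleWords (b : ℕ → ℕ) (n : ℕ) :
    2 ^ Nat.count (fun k => ∀ i, ¬ b i ∣ k) n ≤ #(admissibleWords b n) := by
  rw [Nat.count_eq_card_filter_fin, ← card_filter_eq_one_imp_mem]
  refine card_le_card fun W hW => ?_
  simp only [admissibleWords, mem_filter, mem_univ, true_and] at hW ⊢
  exact fun i => ⟨0, fun m hm => by simpa [ZMod.natCast_eq_zero_iff] using (hW m hm) i⟩

open scoped Classical in
theorem count_not_dvd_le_logb_card_admissibleWords (b : ℕ → ℕ) (n : ℕ) :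
    (Nat.count (fun k => ∀ i, ¬ b i ∣ k) n : ℝ) ≤ Real.logb 2 #(admissibleWords b n) := by
  have h := two_pow_count_not_dvd_le_card_admissibleWords b n
  rw [Real.le_logb_iff_rpow_le one_lt_two (by exact_mod_cast (pow_pos two_pos _).trans_le h),
    Real.rpow_natCast]
  exact_mod_cast h

variable {b : ℕ → ℕ} [∀ i, NeZero (b i)]

theorem card_admissibleWords_le (hb : Pairwise (Nat.Coprime on b)) (K n : ℕ) :
    (#(admissibleWords b n) : ℝ) ≤ (∏ i : Fin K, (b i : ℝ)) *
      2 ^ (n * ∏ i : Fin K, (1 - 1 / (b i : ℝ)) + ∏ i : Fin K, (b i : ℝ)) := by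
  let good (ρ : ∀ i : Fin K, ZMod (b i)) : Finset (Fin n) := {m | AvoidsResidues ρ m}
  have hcover : admissibleWords b n
      ⊆ univ.biUnion fun ρ => {W : Fin n → Fin 2 | ∀ m, W m = 1 → m ∈ good ρ} := by
    intro W hW
    simp only [admissibleWords, mem_filter, mem_univ, true_and] at hW
    choose r hr using hW
    simp only [mem_biUnion, mem_univ, true_and, mem_filter]
    refine ⟨fun i => r i, fun m hm => ?_⟩
    simp only [good, mem_filter, mem_univ, true_and]
    exact fun i => hr i m hm
  have hgood : ∀ ρ, ((2 ^ #(good ρ) : ℕ) : ℝ)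
      ≤ 2 ^ (n * ∏ i : Fin K, (1 - 1 / (b i : ℝ)) + ∏ i : Fin K, (b i : ℝ)) := by
    intro ρ
    rw [Nat.cast_pow, Nat.cast_ofNat, ← Real.rpow_natCast]
    refine Real.rpow_le_rpow_of_exponent_le one_le_two ?_
    rw [← Nat.count_eq_card_filter_fin]
    linarith [(abs_le.mp (abs_count_avoidsResidues_sub_le
      (hb.comp_of_injective (Fin.val_injective (n := K))) ρ n)).2]
  have hcard : #(admissibleWords b n) ≤ ∑ ρ, 2 ^ #(good ρ) :=
    (card_le_card hcover).trans (card_biUnion_le.trans_eq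
      (sum_congr rfl fun ρ _ => by convert card_filter_eq_one_imp_mem (good ρ)))
  calc (#(admissibleWords b n) : ℝ) ≤ ∑ ρ, ((2 ^ #(good ρ) : ℕ) : ℝ) := by
        rw [← Nat.cast_sum]
        exact Nat.cast_le.2 hcard
    _ ≤ ∑ _ρ : ∀ i : Fin K, ZMod (b i),
          (2 : ℝ) ^ (n * ∏ i : Fin K, (1 - 1 / (b i : ℝ)) + ∏ i : Fin K, (b i : ℝ)) :=
        sum_le_sum fun ρ _ => hgood ρ
    _ = _ := by
        simp only [sum_const, card_univ, Fintype.card_pi, ZMod.card, nsmul_eq_mul, Nat.cast_prod]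

theorem logb_card_admissibleWords_le (hb : Pairwise (Nat.Coprime on b)) (K n : ℕ) :
    Real.logb 2 #(admissibleWords b n) ≤ n * ∏ i : Fin K, (1 - 1 / (b i : ℝ))
      + (Real.logb 2 (∏ i : Fin K, (b i : ℝ)) + ∏ i : Fin K, (b i : ℝ)) := by
  have hpos : (0 : ℝ) < #(admissibleWords b n) := by
    exact_mod_cast (pow_pos two_pos _).trans_le
      (two_pow_count_not_dvd_le_card_admissibleWords b n)
  have hprod : (0 : ℝ) < ∏ i : Fin K, (b i : ℝ) :=
    prod_pos fun i _ => by exact_mod_cast NeZero.pos (b i)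
  calc Real.logb 2 #(admissibleWords b n)
      ≤ Real.logb 2 ((∏ i : Fin K, (b i : ℝ)) *
          2 ^ (n * ∏ i : Fin K, (1 - 1 / (b i : ℝ)) + ∏ i : Fin K, (b i : ℝ))) :=
        Real.logb_le_logb_of_le one_lt_two hpos (card_admissibleWords_le hb K n)
    _ = _ := by
        rw [Real.logb_mul hprod.ne' (by positivity), Real.logb_rpow two_pos one_lt_two.ne']
        ring

end Words

open Classical in
theorem stmt11 (b : ℕ → ℕ) (hb : ∀ i, 2 ≤ b i)
    (hcop : ∀ i j, i ≠ j → Nat.Coprime (b i) (b j))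
    (hsum : Summable fun i => (1 : ℝ) / b i) :
    Tendsto (fun N : ℕ =>
        (((Finset.Icc (1 : ℤ) N).filter fun m => ∀ i, ¬ ((b i : ℤ) ∣ m)).card : ℝ) / N)
      atTop (nhds (∏' i, (1 - 1 / (b i : ℝ)))) ∧
    Tendsto (fun n : ℕ =>
        Real.logb 2
          ((Finset.univ.filter fun W : Fin n → Fin 2 => (XB b ∩ cylinder W).Nonempty).card) / n)
      atTop (nhds (∏' i, (1 - 1 / (b i : ℝ)))) := by
  have : ∀ i, NeZero (b i) := fun i => NeZero.of_pos (by have := hb i; omega)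
  have hcop' : Pairwise (Nat.Coprime on b) := fun i j h => hcop i j h
  have hp := tendsto_prod_fin_one_sub hsum
  have hq : Tendsto (fun K => ∏ i : Fin K, (1 - 1 / (b i : ℝ)) - ∑' j, 1 / (b (j + K) : ℝ))
      atTop (𝓝 (∏' i, (1 - 1 / (b i : ℝ)))) := by
    simpa using hp.sub (tendsto_sum_nat_add fun i => 1 / (b i : ℝ))
  refine ⟨?_, ?_⟩
  · simp_rw [card_Icc_filter_not_dvd_eq_count]
    refine tendsto_div_of_forall_le_of_forall_le (C := fun K => ∏ i : Fin K, (b i : ℝ) + 1)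
      (D := fun K => ∏ i : Fin K, (b i : ℝ) + 1) hp hq (fun K N => ?_) (fun K N => ?_)
    · have hsucc : Nat.count (fun k => ∀ i, ¬ b i ∣ k) (N + 1)
          ≤ Nat.count (fun k => ∀ i, ¬ b i ∣ k) N + 1 := by
        rw [Nat.count_succ]
        split_ifs <;> omega
      have := (Nat.cast_le (α := ℝ)).2 hsucc
      push_cast at this
      linarith [count_not_dvd_le hcop' K N]
    · exact (le_count_not_dvd hcop' hsum K N).trans
        (Nat.cast_le.2 (Nat.count_monotone _ N.le_succ))
  · simp_rw [card_filter_XB_inter_cylinder_nonempty]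
    exact tendsto_div_of_forall_le_of_forall_le hp hq (logb_card_admissibleWords_le hcop')
      fun K n => (le_count_not_dvd hcop' hsum K n).trans
        (count_not_dvd_le_logb_card_admissibleWords b n)
end
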